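/- Let f⁻ : ℕ → ℝ≥0 with f⁻(1) = 0 and f⁻(S) ≥ γS for S ≥ 2 (γ > 0), and f⁺ : ℕ → ℝ≥0 with sup_S f⁺(S)·(α^{+,−} + α^{+,+}) < 1 where α^{+,−}, α^{+,+} ≥ 0. Then there exist positive constants η, η₁₁, η₁₂, η₂₁, η₂₂, ρ, C such that the function V(X₁₁, X₁₂, X₂₁, X₂₂, S) = η₁₁X₁₁ + η₁₂X₁₂ + η₂₁X₂₁ + η₂₂X₂₂ + ηS satisfies, for all nonnegative arguments with S ≥ 1: 𝓛V ≤ −ρV + C, where 𝓛V = Σ_{l,m} η_{lm}(−βX_{lm} + α_{lm}λ_m) + η(λ₁ − λ₂), with λ₁ = f⁺(S)(μ₁ + β(X₁₁ + X₁₂)), λ₂ = f⁻(S)(μ₂ + β(X₂₁ + X₂₂)), β, μ₁, μ₂ > 0, α₁₁ = α^{+,+}, α₁₂ = α^{+,−} (with α₁₁ + α₁₂ < 1 after normalizing sup f⁺ ≤ 1), and α₂₁, α₂₂ > 0 arbitrary. -/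
import Mathlib


set_option maxHeartbeats 1000000 in
theorem stmt_15 (β μ₁ μ₂ γ : ℝ) (hβ : 0 < β) (hμ₁ : 0 < μ₁) (hμ₂ : 0 < μ₂) (hγ : 0 < γ)
    (fp fm : ℕ → ℝ) (hfpnn : ∀ S, 0 ≤ fp S) (hfmnn : ∀ S, 0 ≤ fm S)
    (hfm1 : fm 1 = 0) (hfm : ∀ S : ℕ, 2 ≤ S → γ * S ≤ fm S)
    (hfp1 : ∀ S, fp S ≤ 1)
    (α₁₁ α₁₂ α₂₁ α₂₂ : ℝ) (h11 : 0 < α₁₁) (h12 : 0 < α₁₂)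
    (h21 : 0 < α₂₁) (h22 : 0 < α₂₂) (hsum : α₁₁ + α₁₂ < 1) :
    ∃ η η₁₁ η₁₂ η₂₁ η₂₂ ρ C : ℝ,
      0 < η ∧ 0 < η₁₁ ∧ 0 < η₁₂ ∧ 0 < η₂₁ ∧ 0 < η₂₂ ∧ 0 < ρ ∧ 0 < C ∧
      ∀ (X₁₁ X₁₂ X₂₁ X₂₂ : ℝ) (S : ℕ),
        0 ≤ X₁₁ → 0 ≤ X₁₂ → 0 ≤ X₂₁ → 0 ≤ X₂₂ → 1 ≤ S →
        let lam₁ := fp S * (μ₁ + β * (X₁₁ + X₁₂))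
        let lam₂ := fm S * (μ₂ + β * (X₂₁ + X₂₂))
        η₁₁ * (-β * X₁₁ + α₁₁ * lam₁) + η₁₂ * (-β * X₁₂ + α₁₂ * lam₂) +
            η₂₁ * (-β * X₂₁ + α₂₁ * lam₁) + η₂₂ * (-β * X₂₂ + α₂₂ * lam₂) +
            η * (lam₁ - lam₂) ≤
          -ρ * (η₁₁ * X₁₁ + η₁₂ * X₁₂ + η₂₁ * X₂₁ + η₂₂ * X₂₂ + η * S) + C := by
  obtain ⟨g, hgdef⟩ : ∃ g : ℝ, g = (1 - α₁₁ - α₁₂) / 4 := ⟨_, rfl⟩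
  have hg : 0 < g := by rw [hgdef]; linarith
  have hgsmall : g ≤ 1 / 4 := by rw [hgdef]; linarith
  obtain ⟨η, hηdef⟩ : ∃ η : ℝ, η = α₁₂ + g := ⟨_, rfl⟩
  have hη : 0 < η := by rw [hηdef]; linarith
  obtain ⟨η₂₁, h21def⟩ : ∃ x : ℝ, x = g / (2 * α₂₁) := ⟨_, rfl⟩
  have hη₂₁ : 0 < η₂₁ := by rw [h21def]; positivity
  obtain ⟨η₂₂, h22def⟩ : ∃ x : ℝ, x = g / (2 * α₂₂) := ⟨_, rfl⟩
  have hη₂₂ : 0 < η₂₂ := by rw [h22def]; positivity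
  obtain ⟨ρ, hρdef⟩ : ∃ ρ : ℝ, ρ = min β (min (g * β) (g * γ * μ₂ / (2 * η))) := ⟨_, rfl⟩
  have hρ : 0 < ρ := by rw [hρdef]; exact lt_min hβ (lt_min (by positivity) (by positivity))
  obtain ⟨C, hCdef⟩ : ∃ C : ℝ, C = μ₁ + ρ * η + 1 := ⟨_, rfl⟩
  have hC : 0 < C := by rw [hCdef]; positivity
  have hCge : μ₁ + ρ * η + 1 ≤ C := hCdef.ge
  have e21 : η₂₁ * α₂₁ = g / 2 := by rw [h21def]; field_simp
  have e22 : η₂₂ * α₂₂ = g / 2 := by rw [h22def]; field_simp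
  have hρβ : ρ ≤ β := hρdef ▸ min_le_left _ _
  have hρgβ : ρ ≤ g * β := hρdef ▸ le_trans (min_le_right _ _) (min_le_left _ _)
  have hρ3 : ρ ≤ g * γ * μ₂ / (2 * η) := hρdef ▸ le_trans (min_le_right _ _) (min_le_right _ _)
  have hρη : ρ * η ≤ g * γ * μ₂ / 2 := by
    calc ρ * η ≤ g * γ * μ₂ / (2 * η) * η := mul_le_mul_of_nonneg_right hρ3 hη.le
      _ = g * γ * μ₂ / 2 := by field_simp
  have hAval : α₁₁ + η₂₁ * α₂₁ + η = 1 - 5 * g / 2 := by rw [e21, hηdef, hgdef]; ring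
  have hBval : α₁₂ + η₂₂ * α₂₂ - η = -(g / 2) := by rw [e22, hηdef]; ring
  refine ⟨η, 1, 1, η₂₁, η₂₂, ρ, C, hη, one_pos, one_pos, hη₂₁, hη₂₂, hρ, hC, ?_⟩
  intro X₁₁ X₁₂ X₂₁ X₂₂ S h1 h2 h3 h4 hS
  dsimp only
  have hY : (0:ℝ) ≤ X₁₁ + X₁₂ := by linarith
  have hYμ : (0:ℝ) ≤ μ₁ + β * (X₁₁ + X₁₂) := by nlinarith
  have hann : 0 ≤ fp S * (μ₁ + β * (X₁₁ + X₁₂)) := mul_nonneg (hfpnn S) hYμ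
  have ha : fp S * (μ₁ + β * (X₁₁ + X₁₂)) ≤ μ₁ + β * (X₁₁ + X₁₂) := by
    nlinarith [mul_nonneg (sub_nonneg.2 (hfp1 S)) hYμ]
  have hcoef : (0:ℝ) ≤ 1 - 5 * g / 2 := by linarith
  set a : ℝ := fp S * (μ₁ + β * (X₁₁ + X₁₂)) with hadef
  set b : ℝ := fm S * (μ₂ + β * (X₂₁ + X₂₂)) with hbdef
  have hre : 1 * (-β * X₁₁ + α₁₁ * a) + 1 * (-β * X₁₂ + α₁₂ * b) +
      η₂₁ * (-β * X₂₁ + α₂₁ * a) + η₂₂ * (-β * X₂₂ + α₂₂ * b) + η * (a - b) =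
      -β * (X₁₁ + X₁₂) - β * (η₂₁ * X₂₁ + η₂₂ * X₂₂) +
      (α₁₁ + η₂₁ * α₂₁ + η) * a + (α₁₂ + η₂₂ * α₂₂ - η) * b := by ring
  rw [hre, hAval, hBval]
  have p2' : ρ * (η₂₁ * X₂₁) ≤ β * (η₂₁ * X₂₁) :=
    mul_le_mul_of_nonneg_right hρβ (mul_nonneg hη₂₁.le h3)
  have p3' : ρ * (η₂₂ * X₂₂) ≤ β * (η₂₂ * X₂₂) :=
    mul_le_mul_of_nonneg_right hρβ (mul_nonneg hη₂₂.le h4)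
  have p1 : ρ * (X₁₁ + X₁₂) ≤ g * β * (X₁₁ + X₁₂) := mul_le_mul_of_nonneg_right hρgβ hY
  have hSnn : (0:ℝ) ≤ (S:ℝ) := Nat.cast_nonneg S
  have p4 : ρ * η * (S:ℝ) ≤ g * γ * μ₂ / 2 * (S:ℝ) := mul_le_mul_of_nonneg_right hρη hSnn
  have q1 : (1 - 5 * g / 2) * a ≤ (1 - 5 * g / 2) * (μ₁ + β * (X₁₁ + X₁₂)) :=
    mul_le_mul_of_nonneg_left ha hcoef
  have pgβY : 0 ≤ g * β * (X₁₁ + X₁₂) := by positivity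
  have pgμ : 0 < g * μ₁ := by positivity
  clear hre hAval hBval hρdef hCdef hgdef hηdef h21def h22def hρ3 hρgβ hρβ e21 e22
  rcases eq_or_lt_of_le hS with hS1 | hS2
  · have hb0 : b = 0 := by rw [hbdef, ← hS1, hfm1]; ring
    have hScast : (S:ℝ) = 1 := by rw [← hS1]; norm_num
    rw [hb0, hScast]
    clear_value a b
    clear hadef hbdef hfm1 hfm hfmnn hfpnn hfp1
    linarith [q1, p1, p2', p3', hCge, pgβY, pgμ]
  · have hS2' : 2 ≤ S := hS2
    have hβX : (0:ℝ) ≤ β * (X₂₁ + X₂₂) := mul_nonneg hβ.le (by linarith)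
    have hb : γ * μ₂ * (S:ℝ) ≤ b := by
      rw [hbdef]
      calc γ * μ₂ * (S:ℝ) = γ * (S:ℝ) * μ₂ := by ring
        _ ≤ γ * (S:ℝ) * (μ₂ + β * (X₂₁ + X₂₂)) :=
            mul_le_mul_of_nonneg_left (by linarith) (mul_nonneg hγ.le hSnn)
        _ ≤ fm S * (μ₂ + β * (X₂₁ + X₂₂)) :=
            mul_le_mul_of_nonneg_right (hfm S hS2') (by linarith)
    have q2 : g / 2 * (γ * μ₂ * (S:ℝ)) ≤ g / 2 * b :=
      mul_le_mul_of_nonneg_left hb (by positivity)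
    clear_value a b
    clear hadef hbdef hfm1 hfm hfmnn hfpnn hfp1 hb
    linarith [q1, p1, p2', p3', p4, q2, hCge, pgβY, pgμ, mul_nonneg hρ.le hη.le]
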